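/- arXiv:2105.14903 — 3 statements merged into one kernel-verified Lean document; each statement's English description precedes it below -/
import Mathlib

section
/- Fix integers n ≥ 82 of the form n = 3^ℓ - 1 with ℓ ≥ 4, and fix k ≥ 1. Let Q' : ℕ → ℚ satisfy Q' i ≥ 3 * Q' (i-1) + 3^(i-1) * ((N_{i-1}*k - 2*k)/3 + 1) * (M_{i-1}*k + 1) for 2 ≤ i ≤ ℓ, where M_j = 3^j - 1 and N_j = (n+1)/3^j - 1, and Q' 1 ≥ 0. Then for all 2 ≤ i ≤ ℓ, Q' i > 3^(i-3) * k^2 * ((i-1)*n - 3^i / 2). -/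
/-!
Write `N = n + 1 = 3^ℓ`. For `a = 3^(i-1)` the increment in the recurrence factors as
`((N - 3a)k/3 + a) * ((a - 1)k + 1)`, which is at least `a k² (n - 3a) / 9` as soon as `a ≥ 3/2`.
The quantity `V i = 3^i/27 · k² · (i n + 1 - 3·3^i/2)` satisfies `V (i+1) - 3 V i = 3^i/9 · k² (n - 3·3^i)`
exactly, so `Q' - V` at least triples from one level to the next. Starting from `V 3 < Q' 3` (checked
from the first two increments, using `n ≥ 82`), this gives `V i < Q' i` for `3 ≤ i ≤ ℓ`, and `V i`
exceeds the claimed bound by `3^i/27 · k² (3^ℓ - 3^i) ≥ 0`. The case `i = 2` is a direct computation.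
-/

/-- The increment `3^(i-1) ((N_{i-1} k - 2k)/3 + 1)(M_{i-1} k + 1)` of the recurrence, with `a = 3^(i-1)`. -/
def quarticIncrement (n k a : ℚ) : ℚ :=
  a * ((((n + 1) / a - 1) * k - 2 * k) / 3 + 1) * ((a - 1) * k + 1)

def quarticBound (n k : ℚ) (i : ℕ) : ℚ :=
  3 ^ i / 27 * k ^ 2 * (i * n + 1 - 3 * 3 ^ i / 2)

section

variable {n k a : ℚ}

theorem quarticIncrement_eq (ha : a ≠ 0) :
    quarticIncrement n k a = ((n + 1 - 3 * a) * k / 3 + a) * ((a - 1) * k + 1) := by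
  unfold quarticIncrement
  field_simp
  ring

theorem le_quarticIncrement (ha : 3 / 2 ≤ a) (han : 3 * a ≤ n + 1) (hk : 0 ≤ k) :
    a / 9 * k ^ 2 * (n - 3 * a) ≤ quarticIncrement n k a := by
  rw [quarticIncrement_eq (by positivity)]
  have hN : 0 ≤ n + 1 - 3 * a := by linarith
  have hquad : 0 ≤ (n + 1 - 3 * a) * (2 * a - 3) * k ^ 2 := by
    have : 0 ≤ 2 * a - 3 := by linarith
    positivity
  have hlin : 0 ≤ (n + 1 - 3 * a) * k := mul_nonneg hN hk
  have hlin' : 0 ≤ a * (a - 1) * k := by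
    have : 0 ≤ a - 1 := by linarith
    positivity
  nlinarith

theorem quarticIncrement_three_gt (hn : 23 / 2 ≤ n) (hk : 0 ≤ k) :
    k ^ 2 * (n - 9 / 2) / 3 < quarticIncrement n k 3 := by
  rw [quarticIncrement_eq (by norm_num)]
  nlinarith [mul_nonneg (sub_nonneg.2 hn) (sq_nonneg k)]

theorem quarticBound_three_lt (hn : 28 ≤ n) (hk : 0 ≤ k) :
    quarticBound n k 3 < 3 * quarticIncrement n k 3 + quarticIncrement n k 9 := by
  rw [quarticIncrement_eq (by norm_num), quarticIncrement_eq (by norm_num), quarticBound]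
  nlinarith [mul_nonneg (sub_nonneg.2 hn) (sq_nonneg k)]

theorem quarticBound_succ_sub (i : ℕ) :
    quarticBound n k (i + 1) - 3 * quarticBound n k i = 3 ^ i / 9 * k ^ 2 * (n - 3 * 3 ^ i) := by
  unfold quarticBound
  push_cast
  ring

theorem le_quarticBound {i : ℕ} (hi : (3 : ℚ) ^ i ≤ n + 1) :
    (3 : ℚ) ^ ((i : ℤ) - 3) * k ^ 2 * ((i - 1) * n - 3 ^ i / 2) ≤ quarticBound n k i := by
  have hzpow : (3 : ℚ) ^ ((i : ℤ) - 3) = 3 ^ i / 27 := by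
    rw [zpow_sub₀ (by norm_num)]
    norm_num
  have hslack : 0 ≤ 3 ^ i / 27 * k ^ 2 * (n + 1 - 3 ^ i) := by
    have : (0 : ℚ) ≤ n + 1 - 3 ^ i := by linarith
    positivity
  rw [hzpow, quarticBound]
  linarith

end

theorem lt_of_lt_of_sub_mul_le_sub {R : Type*} [CommRing R] [LinearOrder R] [IsStrictOrderedRing R]
    {Q V : ℕ → R} {c : R} (hc : 0 < c) {i₀ m : ℕ} (h₀ : V i₀ < Q i₀)
    (hstep : ∀ i, i₀ ≤ i → i < m → V (i + 1) - c * V i ≤ Q (i + 1) - c * Q i) :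
    ∀ i, i₀ ≤ i → i ≤ m → V i < Q i := by
  intro i hi
  induction i, hi using Nat.le_induction with
  | base => exact fun _ => h₀
  | succ i hi ih =>
    intro him
    have hgap : 0 < c * Q i - c * V i := by
      rw [← mul_sub]
      exact mul_pos hc (sub_pos.2 (ih (by omega)))
    have := hstep i hi him
    linarith

theorem stmt_6_general (ℓ n k : ℕ) (hn : n = 3 ^ ℓ - 1) (hn82 : 82 ≤ n)
    (Q' : ℕ → ℚ) (hQ1 : 0 ≤ Q' 1)
    (hrec : ∀ i, 2 ≤ i → i ≤ ℓ →
      Q' i ≥ 3 * Q' (i - 1) +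
        3 ^ (i - 1) *
          (((((n : ℚ) + 1) / 3 ^ (i - 1) - 1) * k - 2 * k) / 3 + 1) *
          (((3 : ℚ) ^ (i - 1) - 1) * k + 1)) :
    ∀ i, 2 ≤ i → i ≤ ℓ →
      Q' i > (3 : ℚ) ^ ((i : ℤ) - 3) * (k : ℚ) ^ 2 *
        (((i : ℚ) - 1) * n - (3 : ℚ) ^ i / 2) := by
  intro i hi2 hiℓ
  have hpow : ∀ j ≤ ℓ, (3 : ℚ) ^ j ≤ n + 1 := fun j hj => by
    have : (n : ℚ) + 1 = 3 ^ ℓ := by exact_mod_cast (by omega : n + 1 = 3 ^ ℓ)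
    exact this ▸ pow_le_pow_right₀ (by norm_num) hj
  have hn82' : (82 : ℚ) ≤ n := by exact_mod_cast hn82
  have hk : (0 : ℚ) ≤ k := k.cast_nonneg
  have hinc : ∀ j, 2 ≤ j → j ≤ ℓ →
      quarticIncrement n k (3 ^ (j - 1)) ≤ Q' j - 3 * Q' (j - 1) :=
    fun j hj2 hjℓ => le_sub_iff_add_le'.2 (hrec j hj2 hjℓ)
  obtain rfl | hi3 := hi2.eq_or_lt
  · have h2 := hinc 2 le_rfl hiℓ
    have := quarticIncrement_three_gt (n := n) (by linarith) hk
    norm_num at h2 ⊢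
    linarith
  · have hbase : quarticBound n k 3 < Q' 3 := by
      have h2 := hinc 2 le_rfl (by omega)
      have h3 := hinc 3 (by norm_num) (by omega)
      norm_num at h2 h3
      linarith [quarticBound_three_lt (n := n) (by linarith) hk]
    have hstep : ∀ j, 3 ≤ j → j < ℓ →
        quarticBound n k (j + 1) - 3 * quarticBound n k j ≤ Q' (j + 1) - 3 * Q' j := by
      intro j _ hjℓ
      have hle := le_quarticIncrement (n := n) (k := k) (a := 3 ^ j)
        (by linarith [pow_le_pow_right₀ (a := (3 : ℚ)) (by norm_num) (by omega : 1 ≤ j)])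
        (by rw [← pow_succ']; exact hpow (j + 1) hjℓ) hk
      rw [quarticBound_succ_sub]
      simpa only [Nat.add_sub_cancel] using hle.trans (hinc (j + 1) (by omega) hjℓ)
    exact (le_quarticBound (hpow i hiℓ)).trans_lt
      (lt_of_lt_of_sub_mul_le_sub three_pos hbase hstep i hi3 hiℓ)

theorem stmt_6 (ℓ n k : ℕ) (hℓ : 4 ≤ ℓ) (hn : n = 3 ^ ℓ - 1) (hn82 : 82 ≤ n)
    (hk : 1 ≤ k) (Q' : ℕ → ℚ) (hQ1 : 0 ≤ Q' 1)
    (hrec : ∀ i, 2 ≤ i → i ≤ ℓ →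
      Q' i ≥ 3 * Q' (i - 1) +
        3 ^ (i - 1) *
          (((((n : ℚ) + 1) / 3 ^ (i - 1) - 1) * k - 2 * k) / 3 + 1) *
          (((3 : ℚ) ^ (i - 1) - 1) * k + 1)) :
    ∀ i, 2 ≤ i → i ≤ ℓ →
      Q' i > (3 : ℚ) ^ ((i : ℤ) - 3) * (k : ℚ) ^ 2 *
        (((i : ℚ) - 1) * n - (3 : ℚ) ^ i / 2) :=
  stmt_6_general ℓ n k hn hn82 Q' hQ1 hrec
end

section
/- For all i ≥ 2 and n of the form 3^ℓ - 1 with i ≤ ℓ: 3^(i-1)*((N*k - 2k)/3 + 1)*(M*k + 1) > 3^(i-3) * k^2 * (n - 3^i), where M = 3^(i-1) - 1, N = (n+1)/3^(i-1) - 1, and k ≥ 1 is an integer. -/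
/-! Write `3 ^ (i - 1) = x` and `n + 1 = x * y`, so `y = 3 ^ (ℓ - i + 1) ≥ 3`. Dropping the two `+ 1`s
on the left leaves `(x / 3) k² (y - 3)(x - 1)`, and this dominates `(x / 9) k² (x y - 1 - 3 x)`
because the difference of the cofactors is `(2 x - 3)(y - 3) + 1 ≥ 0`. -/

lemma quartic_count_step_bound {K : Type*} [Field K] [LinearOrder K] [IsStrictOrderedRing K]
    {x y k : K} (hx : 3 / 2 ≤ x) (hy : 3 ≤ y) (hk : 0 ≤ k) :
    x / 9 * k ^ 2 * (x * y - 1 - 3 * x) <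
      x * (((y - 1) * k - 2 * k) / 3 + 1) * ((x - 1) * k + 1) := by
  have ha : 0 ≤ (y - 3) * k / 3 := by have := sub_nonneg.2 hy; positivity
  have hb : 0 ≤ (x - 1) * k := mul_nonneg (by linarith) hk
  calc x / 9 * k ^ 2 * (x * y - 1 - 3 * x)
      ≤ x / 9 * k ^ 2 * (3 * (y - 3) * (x - 1)) := by
        gcongr
        nlinarith [mul_nonneg (by linarith : (0 : K) ≤ 2 * x - 3) (sub_nonneg.2 hy)]
    _ = x * ((y - 3) * k / 3 * ((x - 1) * k)) := by ring
    _ < x * (((y - 3) * k / 3 + 1) * ((x - 1) * k + 1)) := by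
        gcongr
        · linarith
        · nlinarith
    _ = x * (((y - 1) * k - 2 * k) / 3 + 1) * ((x - 1) * k + 1) := by ring

theorem stmt_7_general (i ℓ n k : ℕ) (hi : 2 ≤ i) (hiℓ : i ≤ ℓ) (hn : n = 3 ^ ℓ - 1) :
    (3 : ℚ) ^ (i - 1) *
        (((((n : ℚ) + 1) / 3 ^ (i - 1) - 1) * k - 2 * k) / 3 + 1) *
        (((3 : ℚ) ^ (i - 1) - 1) * k + 1) >
      (3 : ℚ) ^ ((i : ℤ) - 3) * (k : ℚ) ^ 2 * ((n : ℚ) - 3 ^ i) := by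
  set x : ℚ := 3 ^ (i - 1)
  set y : ℚ := 3 ^ (ℓ - (i - 1))
  have hn1 : (n : ℚ) + 1 = x * y := by
    rw [hn, Nat.cast_sub (Nat.one_le_pow _ _ (by norm_num)), ← pow_add]
    push_cast
    rw [Nat.add_sub_of_le (by omega)]
    ring
  have h3i : (3 : ℚ) ^ i = 3 * x := by rw [← pow_succ', Nat.sub_add_cancel (by omega)]
  have hcoef : (3 : ℚ) ^ ((i : ℤ) - 3) = x / 9 := by
    rw [show (i : ℤ) - 3 = ((i - 1 : ℕ) : ℤ) - 2 by omega, zpow_sub₀ (by norm_num), zpow_natCast]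
    norm_num [x]
  have hx : 3 / 2 ≤ x :=
    le_trans (by norm_num) (le_self_pow₀ (by norm_num : (1 : ℚ) ≤ 3) (by omega))
  have hy : 3 ≤ y := le_self_pow₀ (by norm_num : (1 : ℚ) ≤ 3) (by omega)
  rw [hcoef, h3i, hn1, mul_div_cancel_left₀ y (by positivity),
    show (n : ℚ) = x * y - 1 by linarith]
  exact quartic_count_step_bound hx hy k.cast_nonneg

theorem stmt_7 (i ℓ n k : ℕ) (hi : 2 ≤ i) (hiℓ : i ≤ ℓ) (hn : n = 3 ^ ℓ - 1)
    (hk : 1 ≤ k) :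
    (3 : ℚ) ^ (i - 1) *
        (((((n : ℚ) + 1) / 3 ^ (i - 1) - 1) * k - 2 * k) / 3 + 1) *
        (((3 : ℚ) ^ (i - 1) - 1) * k + 1) >
      (3 : ℚ) ^ ((i : ℤ) - 3) * (k : ℚ) ^ 2 * ((n : ℚ) - 3 ^ i) :=
  stmt_7_general i ℓ n k hi hiℓ hn
end

section
/- Fix ℓ ≥ 1, let k ≥ 2, and consider any binary array A of dimensions (a·k) × (b·k) such that row x consists entirely of 0s if and only if k divides x+1 (rows indexed from 0), and such that every other row contains at least one 1 in every window of k consecutive cells. Then for any subarray R = A[x₁..x₂][y₁..y₂] with x₂ - x₁ + 1 ≥ k and y₂ - y₁ + 1 ≥ k, the value x₁ mod k is determined by the contents of R alone: it is recoverable as the unique residue consistent with the positions of the all-zero rows of R. -/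
/-! Inside the first `k` rows of the subarray lies a row whose index in `A` is `≡ -1 (mod k)`;
it is all zero in `A`, so the same row of the subarray, read in `A'`, is zero on a window of
`k` cells and hence also has index `≡ -1 (mod k)` in `A'`. The two top rows then agree mod `k`. -/

lemma exists_lt_dvd_add_add_one {k : ℕ} (hk : 0 < k) (x : ℕ) : ∃ d < k, k ∣ x + d + 1 := by
  refine ⟨k - 1 - x % k, by omega, x / k + 1, ?_⟩
  have hmod : x % k < k := Nat.mod_lt x hk
  have := Nat.div_add_mod x k
  rw [Nat.mul_succ]
  omega

lemma mod_eq_of_dvd_add_of_dvd_add {k x x' e : ℕ} (h : k ∣ x + e) (h' : k ∣ x' + e) :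
    x % k = x' % k :=
  Nat.ModEq.add_right_cancel' e <|
    (Nat.modEq_zero_iff_dvd.mpr h).trans (Nat.modEq_zero_iff_dvd.mpr h').symm

lemma dvd_add_one_of_window_eq_false {A : ℕ → ℕ → Bool} {k m n : ℕ}
    (hone : ∀ x, x < m → ¬ k ∣ (x + 1) →
      ∀ y, y + k ≤ n → ∃ y', y ≤ y' ∧ y' < y + k ∧ A x y' = true)
    {x y : ℕ} (hx : x < m) (hy : y + k ≤ n)
    (hwindow : ∀ y', y ≤ y' → y' < y + k → A x y' = false) : k ∣ x + 1 := by
  by_contra hndvd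
  obtain ⟨y', hy'₁, hy'₂, hA⟩ := hone x hx hndvd y hy
  simp [hwindow y' hy'₁ hy'₂] at hA

theorem stmt_19_general (k a b a' b' : ℕ)
    (A A' : ℕ → ℕ → Bool)
    -- row `x` of `A` is all zeros iff `k ∣ x + 1`
    (hzero : ∀ x, x < a * k → ((∀ y, y < b * k → A x y = false) ↔ k ∣ (x + 1)))
    (hone' : ∀ x, x < a' * k → ¬ k ∣ (x + 1) →
      ∀ y, y + k ≤ b' * k → ∃ y', y ≤ y' ∧ y' < y + k ∧ A' x y' = true) :
    -- any two equal subarrays of height ≥ k and width ≥ k have the same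
    -- top-row index modulo k: the contents of the subarray determine `x₁ % k`
    ∀ x₁ x₂ y₁ y₂ x₁' x₂' y₁' y₂' : ℕ,
      x₁ ≤ x₂ → x₂ < a * k → y₁ ≤ y₂ → y₂ < b * k → k ≤ x₂ - x₁ + 1 → k ≤ y₂ - y₁ + 1 →
      x₁' ≤ x₂' → x₂' < a' * k → y₁' ≤ y₂' → y₂' < b' * k →
      x₂ - x₁ = x₂' - x₁' → y₂ - y₁ = y₂' - y₁' →
      (∀ dx dy, dx ≤ x₂ - x₁ → dy ≤ y₂ - y₁ → A (x₁ + dx) (y₁ + dy) = A' (x₁' + dx) (y₁' + dy)) →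
      x₁ % k = x₁' % k := by
  intro x₁ x₂ y₁ y₂ x₁' x₂' y₁' y₂' hx₁₂ hx₂ hy₁₂ hy₂ hheight hwidth hx₁₂' hx₂' hy₁₂' hy₂'
    hdx hdy heq
  have hk : 0 < k := Nat.pos_of_ne_zero (by rintro rfl; simp at hx₂)
  obtain ⟨d, hdk, hdvd⟩ := exists_lt_dvd_add_add_one hk x₁
  have hrow : ∀ y, y < b * k → A (x₁ + d) y = false := (hzero _ (by omega)).mpr hdvd
  have hdvd' : k ∣ x₁' + d + 1 := by
    refine dvd_add_one_of_window_eq_false hone' (y := y₁') (by omega) (by omega) fun y' h₁ h₂ ↦ ?_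
    have hcell := heq d (y' - y₁') (by omega) (by omega)
    rwa [Nat.add_sub_cancel' h₁, hrow _ (by omega), eq_comm] at hcell
  exact mod_eq_of_dvd_add_of_dvd_add (e := d + 1) hdvd hdvd'

theorem stmt_19 (ℓ : ℕ) (hℓ : 1 ≤ ℓ) (k a b a' b' : ℕ) (hk : 2 ≤ k)
    (ha : 1 ≤ a) (hb : 1 ≤ b) (ha' : 1 ≤ a') (hb' : 1 ≤ b')
    (A A' : ℕ → ℕ → Bool)
    -- row `x` of `A` is all zeros iff `k ∣ x + 1`
    (hzero : ∀ x, x < a * k → ((∀ y, y < b * k → A x y = false) ↔ k ∣ (x + 1)))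
    -- every other row of `A` has a 1 in every window of `k` consecutive cells
    (hone : ∀ x, x < a * k → ¬ k ∣ (x + 1) →
      ∀ y, y + k ≤ b * k → ∃ y', y ≤ y' ∧ y' < y + k ∧ A x y' = true)
    (hzero' : ∀ x, x < a' * k → ((∀ y, y < b' * k → A' x y = false) ↔ k ∣ (x + 1)))
    (hone' : ∀ x, x < a' * k → ¬ k ∣ (x + 1) →
      ∀ y, y + k ≤ b' * k → ∃ y', y ≤ y' ∧ y' < y + k ∧ A' x y' = true) :
    -- any two equal subarrays of height ≥ k and width ≥ k have the same
    -- top-row index modulo k: the contents of the subarray determine `x₁ % k`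
    ∀ x₁ x₂ y₁ y₂ x₁' x₂' y₁' y₂' : ℕ,
      x₁ ≤ x₂ → x₂ < a * k → y₁ ≤ y₂ → y₂ < b * k → k ≤ x₂ - x₁ + 1 → k ≤ y₂ - y₁ + 1 →
      x₁' ≤ x₂' → x₂' < a' * k → y₁' ≤ y₂' → y₂' < b' * k →
      x₂ - x₁ = x₂' - x₁' → y₂ - y₁ = y₂' - y₁' →
      (∀ dx dy, dx ≤ x₂ - x₁ → dy ≤ y₂ - y₁ → A (x₁ + dx) (y₁ + dy) = A' (x₁' + dx) (y₁' + dy)) →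
      x₁ % k = x₁' % k :=
  stmt_19_general k a b a' b' A A' hzero hone'
end
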